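/- For any partition P with zero cut edges between all communities (i.e., G is a disjoint union of the communities), H^2(G, P) = H^1(G) - H(π) ≤ H^1(G), where H(π) is the entropy of the community-volume distribution; hence partitioning along connected components never increases structural entropy. -/
import Mathlib


open Finset

/-- One-dimensional structural entropy. -/
noncomputable def H1 {n : ℕ} (d : Fin n → ℝ) (V : ℝ) : ℝ :=
  -∑ i, (d i / V) * Real.logb 2 (d i / V)

/-- Volume of community `j` under partition map `P`. -/
noncomputable def commVol {n k : ℕ} (d : Fin n → ℝ) (P : Fin n → Fin k) (j : Fin k) : ℝ :=
  ∑ i ∈ univ.filter (fun i => P i = j), d i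

/-- Two-dimensional structural entropy of partition `P` with cut sizes `g`. -/
noncomputable def H2 {n k : ℕ} (d : Fin n → ℝ) (V : ℝ) (P : Fin n → Fin k)
    (g : Fin k → ℝ) : ℝ :=
  ∑ j, (commVol d P j / V) *
      (-∑ i ∈ univ.filter (fun i => P i = j),
          (d i / commVol d P j) * Real.logb 2 (d i / commVol d P j))
    - ∑ j, (g j / V) * Real.logb 2 (commVol d P j / V)

/-- If the partition has zero cut edges (G is a disjoint union of the communities),
then `H²(G,P) = H¹(G) - H(π) ≤ H¹(G)`, where `H(π)` is the entropy of the
community-volume distribution. -/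
theorem stmt_6 {n k : ℕ} (d : Fin n → ℝ) (hd : ∀ i, 0 < d i)
    (V : ℝ) (hV : V = ∑ i, d i)
    (P : Fin n → Fin k) (hP : ∀ j, 0 < commVol d P j)
    (g : Fin k → ℝ) (hg : ∀ j, g j = 0) :
    H2 d V P g
        = H1 d V - (-∑ j, (commVol d P j / V) * Real.logb 2 (commVol d P j / V))
      ∧ H2 d V P g ≤ H1 d V := by
  rcases Nat.eq_zero_or_pos n with hn | hn
  · subst hn
    have hk : k = 0 := by
      by_contra hk
      have j : Fin k := ⟨0, Nat.pos_of_ne_zero hk⟩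
      have := hP j
      simp [commVol] at this
    subst hk
    simp [H1, H2]
  · have : Nonempty (Fin n) := Fin.pos_iff_nonempty.mp hn
    have hVpos : 0 < V := by
      rw [hV]; exact Finset.sum_pos (fun i _ => hd i) Finset.univ_nonempty
    have hsum : ∑ j, commVol d P j = V := by
      rw [hV]
      exact Finset.sum_fiberwise_of_maps_to (fun x _ => Finset.mem_univ (P x)) d
    have key : ∀ j, (commVol d P j / V) *
        (-∑ i ∈ univ.filter (fun i => P i = j),
            (d i / commVol d P j) * Real.logb 2 (d i / commVol d P j))
        = (-∑ i ∈ univ.filter (fun i => P i = j),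
            (d i / V) * Real.logb 2 (d i / V))
          + (commVol d P j / V) * Real.logb 2 (commVol d P j / V) := by
      intro j
      have hv := hP j
      have hlast : (commVol d P j / V) * Real.logb 2 (commVol d P j / V)
          = ∑ i ∈ univ.filter (fun i => P i = j),
              (d i / V) * Real.logb 2 (commVol d P j / V) := by
        rw [← Finset.sum_mul, ← Finset.sum_div]
        rfl
      rw [mul_neg, Finset.mul_sum]
      have hterm : ∀ i ∈ univ.filter (fun i => P i = j),
          (commVol d P j / V) * ((d i / commVol d P j) * Real.logb 2 (d i / commVol d P j))
          = (d i / V) * Real.logb 2 (d i / V)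
            - (d i / V) * Real.logb 2 (commVol d P j / V) := by
        intro i _
        have hdi := hd i
        have hlog : Real.logb 2 (d i / commVol d P j)
            = Real.logb 2 (d i / V) - Real.logb 2 (commVol d P j / V) := by
          rw [← Real.logb_div (by positivity) (by positivity)]
          congr 1
          field_simp
        rw [hlog]
        field_simp
      rw [Finset.sum_congr rfl hterm, Finset.sum_sub_distrib, hlast]
      ring
    have hmain : H2 d V P g
        = H1 d V - (-∑ j, (commVol d P j / V) * Real.logb 2 (commVol d P j / V)) := by
      unfold H2
      simp only [hg, zero_div, zero_mul, Finset.sum_const_zero, sub_zero]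
      rw [Finset.sum_congr rfl (fun j _ => key j), Finset.sum_add_distrib]
      have : ∑ j, (-∑ i ∈ univ.filter (fun i => P i = j),
          (d i / V) * Real.logb 2 (d i / V))
          = -∑ i, (d i / V) * Real.logb 2 (d i / V) := by
        rw [Finset.sum_neg_distrib, Finset.sum_fiberwise_of_maps_to (fun x _ => Finset.mem_univ (P x))]
      rw [this]
      unfold H1
      ring
    refine ⟨hmain, ?_⟩
    rw [hmain]
    have hnonneg : 0 ≤ -∑ j, (commVol d P j / V) * Real.logb 2 (commVol d P j / V) := by
      rw [← Finset.sum_neg_distrib]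
      apply Finset.sum_nonneg
      intro j _
      have hv := hP j
      have hle : commVol d P j ≤ V := by
        rw [← hsum]
        exact Finset.single_le_sum (fun i _ => (hP i).le) (Finset.mem_univ j)
      have h1 : commVol d P j / V ≤ 1 := by
        rw [div_le_one hVpos]; exact hle
      have hlog : Real.logb 2 (commVol d P j / V) ≤ 0 :=
        Real.logb_nonpos (by norm_num) (by positivity) h1
      have : (commVol d P j / V) * Real.logb 2 (commVol d P j / V) ≤ 0 :=
        mul_nonpos_of_nonneg_of_nonpos (by positivity) hlog
      linarith
    linarith
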